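/- Let a_z, c_x, c_y, c_z ∈ ℝ and ρ = (1/4)(I₄ + a_z(σz⊗I₂ + I₂⊗σz) + c_x σx⊗σx + c_y σy⊗σy + c_z σz⊗σz), and set r = √(c_x² + a_z²); assume r < 1. For the projective measurement of σx on the second qubit (projectors Π± = (I₂ ± σx)/2): both outcomes have probability 1/2, the normalized conditional states of the first qubit are (1/2)(I₂ ± c_x σx + a_z σz) with eigenvalues (1 ± r)/2, and the average conditional von Neumann entropy equals (1/2)S((1+r)/2, (1−r)/2) + (1/2)S((1+r)/2, (1−r)/2) = 1 − (1/2)[(1+r)·log₂(1+r) + (1−r)·log₂(1−r)]. -/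
import Mathlib


open Matrix Complex Polynomial
open scoped Kronecker

noncomputable def σx : Matrix (Fin 2) (Fin 2) ℂ := !![0, 1; 1, 0]
noncomputable def σy : Matrix (Fin 2) (Fin 2) ℂ := !![0, -Complex.I; Complex.I, 0]
noncomputable def σz : Matrix (Fin 2) (Fin 2) ℂ := !![1, 0; 0, -1]

/-- The partial trace over the second tensor factor of a 4×4 matrix on ℂ²⊗ℂ². -/
noncomputable def trB (M : Matrix (Fin 2 × Fin 2) (Fin 2 × Fin 2) ℂ) :
    Matrix (Fin 2) (Fin 2) ℂ :=
  fun i j => ∑ k : Fin 2, M (i, k) (j, k)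

/-- The projectors Π_s = (I₂ + s σx)/2 of the σx measurement, s = ±1. -/
noncomputable def projX (s : ℝ) : Matrix (Fin 2) (Fin 2) ℂ :=
  (1 / 2 : ℂ) • ((1 : Matrix (Fin 2) (Fin 2) ℂ) + (s : ℂ) • σx)

/-- The conditional states (1/2)(I₂ + s c_x σx + a_z σz), s = ±1. -/
noncomputable def condX (s a_z c_x : ℝ) : Matrix (Fin 2) (Fin 2) ℂ :=
  (1 / 2 : ℂ) • ((1 : Matrix (Fin 2) (Fin 2) ℂ) + ((s * c_x : ℝ) : ℂ) • σx +
    (a_z : ℂ) • σz)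

set_option maxHeartbeats 1000000 in
/-- For the σx measurement on the second qubit of the X state ρ:
both outcomes have probability 1/2, the normalized conditional states of the first
qubit are (1/2)(I₂ ± c_x σx + a_z σz) with eigenvalues (1 ± r)/2 where
r = √(c_x² + a_z²) < 1, and the average conditional von Neumann entropy equals
1 − (1/2)[(1+r) log₂(1+r) + (1−r) log₂(1−r)]. -/
theorem sigma_x_measurement_conditional_entropy
    (a_z c_x c_y c_z r : ℝ) (hr : r = Real.sqrt (c_x ^ 2 + a_z ^ 2)) (hr1 : r < 1)
    (ρ : Matrix (Fin 2 × Fin 2) (Fin 2 × Fin 2) ℂ)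
    (hρ : ρ = (1 / 4 : ℂ) • ((1 : Matrix (Fin 2 × Fin 2) (Fin 2 × Fin 2) ℂ) +
      (a_z : ℂ) • (σz ⊗ₖ (1 : Matrix (Fin 2) (Fin 2) ℂ) +
        (1 : Matrix (Fin 2) (Fin 2) ℂ) ⊗ₖ σz) +
      (c_x : ℂ) • (σx ⊗ₖ σx) + (c_y : ℂ) • (σy ⊗ₖ σy) + (c_z : ℂ) • (σz ⊗ₖ σz))) :
    (∀ s : ℝ, s = 1 ∨ s = -1 →
      Matrix.trace (ρ * ((1 : Matrix (Fin 2) (Fin 2) ℂ) ⊗ₖ projX s)) = 1 / 2 ∧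
      trB (ρ * ((1 : Matrix (Fin 2) (Fin 2) ℂ) ⊗ₖ projX s)) =
        (1 / 2 : ℂ) • condX s a_z c_x ∧
      (condX s a_z c_x).charpoly =
        (X - C ((((1 + r) / 2 : ℝ)) : ℂ)) * (X - C ((((1 - r) / 2 : ℝ)) : ℂ))) ∧
    (1 / 2) * (-((1 + r) / 2) * Real.logb 2 ((1 + r) / 2) -
        ((1 - r) / 2) * Real.logb 2 ((1 - r) / 2)) +
      (1 / 2) * (-((1 + r) / 2) * Real.logb 2 ((1 + r) / 2) -
        ((1 - r) / 2) * Real.logb 2 ((1 - r) / 2)) =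
      1 - (1 / 2) * ((1 + r) * Real.logb 2 (1 + r) + (1 - r) * Real.logb 2 (1 - r)) := by
  have hge : (0:ℝ) ≤ c_x ^ 2 + a_z ^ 2 := by positivity
  have hr0 : 0 ≤ r := hr ▸ Real.sqrt_nonneg _
  have hr2 : r ^ 2 = c_x ^ 2 + a_z ^ 2 := by rw [hr]; exact Real.sq_sqrt hge
  have hr2c : (r:ℂ) ^ 2 = (c_x:ℂ) ^ 2 + (a_z:ℂ) ^ 2 := by exact_mod_cast hr2
  constructor
  · intro s hs
    subst hρ
    have hc : condX s a_z c_x =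
        !![((1 + a_z)/2 : ℂ), ((s*c_x)/2 : ℂ); ((s*c_x)/2 : ℂ), ((1 - a_z)/2 : ℂ)] := by
      ext i j
      fin_cases i <;> fin_cases j <;>
        simp [condX, σx, σz, Matrix.one_apply, Matrix.add_apply, Matrix.smul_apply] <;> ring
    refine ⟨?_, ?_, ?_⟩
    · rcases hs with h | h <;> subst h <;>
        simp [Matrix.trace, Matrix.mul_apply, Fintype.sum_prod_type, Fin.sum_univ_two,
          σx, σy, σz, projX, Matrix.one_apply, Matrix.kroneckerMap_apply,
          Matrix.add_apply, Matrix.smul_apply] <;> ring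
    · rcases hs with h | h <;> subst h <;>
        · ext i j
          fin_cases i <;> fin_cases j <;>
            simp [trB, Matrix.mul_apply, Fintype.sum_prod_type, Fin.sum_univ_two,
              σx, σy, σz, projX, condX, Matrix.one_apply, Matrix.kroneckerMap_apply,
              Matrix.add_apply, Matrix.smul_apply] <;> ring
    · rw [hc, Matrix.charpoly, Matrix.det_fin_two]
      simp only [Matrix.charmatrix_apply_eq, Matrix.charmatrix_apply_ne,
        Matrix.cons_val', Matrix.cons_val_zero, Matrix.cons_val_one, Matrix.head_cons,
        Matrix.head_fin_const, Matrix.empty_val', Matrix.cons_val_fin_one, ne_eq,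
        Fin.zero_eq_one_iff, Nat.succ_ne_self, not_false_eq_true, Fin.one_eq_zero_iff,
        Matrix.of_apply]
      have h1 : C (((1 + a_z)/2 : ℂ)) + C (((1 - a_z)/2 : ℂ)) =
          C ((((1 + r) / 2 : ℝ)) : ℂ) + C ((((1 - r) / 2 : ℝ)) : ℂ) := by
        rw [← C_add, ← C_add]; exact congrArg C (by push_cast; ring)
      have hs2 : (s:ℂ)^2 = 1 := by
        rcases hs with h | h <;> subst h <;> norm_num
      have h2 : C (((1 + a_z)/2 : ℂ)) * C (((1 - a_z)/2 : ℂ)) -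
          C (((s*c_x)/2 : ℂ)) * C (((s*c_x)/2 : ℂ)) =
          C ((((1 + r) / 2 : ℝ)) : ℂ) * C ((((1 - r) / 2 : ℝ)) : ℂ) := by
        have key : ((1 + a_z)/2 : ℂ) * ((1 - a_z)/2 : ℂ) -
            ((s*c_x)/2 : ℂ) * ((s*c_x)/2 : ℂ) =
            ((((1 + r) / 2 : ℝ)) : ℂ) * ((((1 - r) / 2 : ℝ)) : ℂ) := by
          push_cast
          linear_combination ((1:ℂ)/4) * hr2c - ((c_x:ℂ)^2/4) * hs2
        rw [← C_mul, ← C_mul, ← C_sub, key]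
        exact map_mul C _ _
      linear_combination (-X : ℂ[X]) * h1 + h2
  · have h1 : (0:ℝ) < 1 + r := by linarith
    have h2 : (0:ℝ) < 1 - r := by linarith
    have l1 : Real.logb 2 ((1+r)/2) = Real.logb 2 (1+r) - 1 := by
      rw [Real.logb_div (ne_of_gt h1) two_ne_zero]; simp
    have l2 : Real.logb 2 ((1-r)/2) = Real.logb 2 (1-r) - 1 := by
      rw [Real.logb_div (ne_of_gt h2) two_ne_zero]; simp
    rw [l1, l2]; ring
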